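/- Let E and F be Banach lattices. A continuous operator T : E → F is weak L-weakly compact if and only if its adjoint T' : F' → E' is weak M-weakly compact. -/

import Mathlib

open Filter Topology Bornology

/-- A sequence in a normed lattice is unbounded-norm (un-) null if `‖ |xₙ| ⊓ u ‖ → 0`
for every positive `u`. -/
def UnNullSeq {G : Type*} [NormedAddCommGroup G] [Lattice G] [HasSolidNorm G] [IsOrderedAddMonoid G] (x : ℕ → G) : Prop :=
  ∀ u : G, 0 ≤ u → Tendsto (fun n => ‖|x n| ⊓ u‖) atTop (𝓝 0)

/-- A pairwise disjoint sequence. -/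
def DisjointSeq {G : Type*} [NormedAddCommGroup G] [Lattice G] [HasSolidNorm G] [IsOrderedAddMonoid G] (x : ℕ → G) : Prop :=
  Pairwise fun n m => |x n| ⊓ |x m| = 0

/-- A norm bounded sequence. -/
def NormBddSeq {G : Type*} [NormedAddCommGroup G] [Lattice G] [HasSolidNorm G] [IsOrderedAddMonoid G] (x : ℕ → G) : Prop :=
  ∃ C : ℝ, ∀ n, ‖x n‖ ≤ C

/-- The solid hull of a set. -/
def SolidHull {G : Type*} [NormedAddCommGroup G] [Lattice G] [HasSolidNorm G] [IsOrderedAddMonoid G] (A : Set G) : Set G :=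
  {x | ∃ y ∈ A, |x| ≤ |y|}

/-- A bounded set is L-weakly compact if every disjoint sequence in its solid hull is
norm null. -/
def LWCSet {G : Type*} [NormedAddCommGroup G] [Lattice G] [HasSolidNorm G] [IsOrderedAddMonoid G] (A : Set G) : Prop :=
  IsBounded A ∧ ∀ x : ℕ → G, (∀ n, x n ∈ SolidHull A) → DisjointSeq x →
    Tendsto (fun n => ‖x n‖) atTop (𝓝 0)

/-- The norm is order continuous: every net decreasing to `0` is norm null. -/
def OrderContNorm (G : Type*) [NormedAddCommGroup G] [Lattice G] [HasSolidNorm G] [IsOrderedAddMonoid G] : Prop :=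
  ∀ (ι : Type) [SemilatticeSup ι] [Nonempty ι] (x : ι → G),
    Antitone x → IsGLB (Set.range x) 0 → Tendsto (fun i => ‖x i‖) atTop (𝓝 0)

/-- Dedekind σ-completeness: every bounded-above increasing sequence has a supremum. -/
def DedekindSigmaComplete (G : Type*) [NormedAddCommGroup G] [Lattice G] [HasSolidNorm G] [IsOrderedAddMonoid G] : Prop :=
  ∀ x : ℕ → G, Monotone x → (∃ b, ∀ n, x n ≤ b) → ∃ s, IsLUB (Set.range x) s

/-- An atom of a Banach lattice. -/
def IsLatticeAtom {G : Type*} [NormedAddCommGroup G] [Lattice G] [HasSolidNorm G] [IsOrderedAddMonoid G] [NormedSpace ℝ G] (a : G) : Prop :=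
  0 < a ∧ ∀ x : G, 0 ≤ x → x ≤ a → ∃ c : ℝ, x = c • a

/-- An atomic Banach lattice: every nonzero positive element dominates an atom. -/
def AtomicLattice (G : Type*) [NormedAddCommGroup G] [Lattice G] [HasSolidNorm G] [IsOrderedAddMonoid G] [NormedSpace ℝ G] : Prop :=
  ∀ x : G, 0 < x → ∃ a, IsLatticeAtom a ∧ a ≤ x

/-- A realization of the Banach lattice `E'` as the topological dual of the Banach lattice
`E`: a linear isometric isomorphism onto `NormedSpace.Dual ℝ E` that identifies the order. -/
structure DualPairing (E E' : Type*) [NormedAddCommGroup E] [Lattice E] [HasSolidNorm E] [IsOrderedAddMonoid E] [NormedSpace ℝ E]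
    [NormedAddCommGroup E'] [Lattice E'] [HasSolidNorm E'] [IsOrderedAddMonoid E'] [NormedSpace ℝ E'] where
  toDual : E' ≃ₗᵢ[ℝ] StrongDual ℝ E
  pos_iff : ∀ f : E', 0 ≤ f ↔ ∀ x : E, 0 ≤ x → 0 ≤ toDual f x

section Pairing

variable {E E' : Type*} [NormedAddCommGroup E] [Lattice E] [HasSolidNorm E] [IsOrderedAddMonoid E] [NormedSpace ℝ E]
  [NormedAddCommGroup E'] [Lattice E'] [HasSolidNorm E'] [IsOrderedAddMonoid E'] [NormedSpace ℝ E']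

/-- A bounded set `A ⊆ E` is weak L-weakly compact if `sup_{x ∈ A} |x'ₙ(x)| → 0` for every
norm bounded un-null sequence `(x'ₙ)` in the dual `E'`. -/
def WeakLWCSet (P : DualPairing E E') (A : Set E) : Prop :=
  IsBounded A ∧ ∀ f : ℕ → E', NormBddSeq f → UnNullSeq f →
    Tendsto (fun n => ⨆ x ∈ A, |P.toDual (f n) x|) atTop (𝓝 0)

/-- A bounded set `B ⊆ E'` is weak* L-weakly compact if `sup_{x' ∈ B} |x'(xₙ)| → 0` for every
norm bounded un-null sequence `(xₙ)` in `E`. -/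
def WeakStarLWCSet (P : DualPairing E E') (B : Set E') : Prop :=
  IsBounded B ∧ ∀ x : ℕ → E, NormBddSeq x → UnNullSeq x →
    Tendsto (fun n => ⨆ f ∈ B, |P.toDual f (x n)|) atTop (𝓝 0)

end Pairing

section Op

variable {E F X : Type*} [NormedAddCommGroup E] [Lattice E] [HasSolidNorm E] [IsOrderedAddMonoid E] [NormedSpace ℝ E]
  [NormedAddCommGroup X] [NormedSpace ℝ X]

/-- `T : E → X` is M-weakly compact if `‖Txₙ‖ → 0` for every norm bounded disjoint
sequence in `E`. -/
def MWeaklyCompact (T : E →L[ℝ] X) : Prop :=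
  ∀ x : ℕ → E, NormBddSeq x → DisjointSeq x → Tendsto (fun n => ‖T (x n)‖) atTop (𝓝 0)

/-- `T : E → X` is weak M-weakly compact if `‖Txₙ‖ → 0` for every un-null sequence in the
closed unit ball of `E`. -/
def WeakMWeaklyCompact (T : E →L[ℝ] X) : Prop :=
  ∀ x : ℕ → E, (∀ n, ‖x n‖ ≤ 1) → UnNullSeq x → Tendsto (fun n => ‖T (x n)‖) atTop (𝓝 0)

/-- `T : X → E` is L-weakly compact if the image of the closed unit ball is an
L-weakly compact set. -/
def LWCOperator (T : X →L[ℝ] E) : Prop :=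
  LWCSet (T '' Metric.closedBall 0 1)

/-- `T : X → E` is weak L-weakly compact if `sup_{x ∈ B_X} |fₙ(Tx)| → 0` for every norm
bounded un-null sequence `(fₙ)` in `E'`. -/
def WeakLWCOperator {E' : Type*} [NormedAddCommGroup E'] [Lattice E'] [HasSolidNorm E'] [IsOrderedAddMonoid E'] [NormedSpace ℝ E']
    (P : DualPairing E E') (T : X →L[ℝ] E) : Prop :=
  ∀ f : ℕ → E', NormBddSeq f → UnNullSeq f →
    Tendsto (fun n => ⨆ x ∈ Metric.closedBall (0 : X) 1, |P.toDual (f n) (T x)|) atTop (𝓝 0)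

/-- `T : X → E'` is weak* L-weakly compact if its image of the unit ball is a weak*
L-weakly compact set. -/
def WeakStarLWCOperator {E' : Type*} [NormedAddCommGroup E'] [Lattice E'] [HasSolidNorm E'] [IsOrderedAddMonoid E'] [NormedSpace ℝ E']
    (P : DualPairing E E') (T : X →L[ℝ] E') : Prop :=
  ∀ x : ℕ → E, NormBddSeq x → UnNullSeq x →
    Tendsto (fun n => ⨆ y ∈ Metric.closedBall (0 : X) 1, |P.toDual (T y) (x n)|) atTop (𝓝 0)

/-- A positive operator. -/
def PositiveOp {F : Type*} [NormedAddCommGroup F] [Lattice F] [HasSolidNorm F] [IsOrderedAddMonoid F] [NormedSpace ℝ F] (T : E →L[ℝ] F) : Prop :=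
  ∀ x : E, 0 ≤ x → 0 ≤ T x

end Op

/-- Membership in `G^a`, the maximal ideal on which the induced norm is order continuous:
`x ∈ G^a` iff every disjoint sequence in `[0, |x|]` is norm null. -/
def InOrderContPart {G : Type*} [NormedAddCommGroup G] [Lattice G] [HasSolidNorm G] [IsOrderedAddMonoid G] (x : G) : Prop :=
  ∀ y : ℕ → G, (∀ n, 0 ≤ y n ∧ y n ≤ |x|) → DisjointSeq y →
    Tendsto (fun n => ‖y n‖) atTop (𝓝 0)

/-!
By the duality `(T'g)(x) = g(Tx)`, `sup_{‖x‖ ≤ 1} |g(Tx)| = ‖T'g‖`, so both sides say that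
`‖T'gₙ‖ → 0` along un-null sequences `(gₙ)`: norm bounded ones on the left, ones in the unit ball
on the right. Rescaling a bounded sequence into the unit ball keeps it un-null. We rescale by
powers of `2` because `|2 • y| = 2 • |y|` holds in every lattice-ordered group, whereas the
order of the lattice is not assumed compatible with multiplication by real scalars.
-/

section LatticeOrderedGroup

variable {G : Type*} [Lattice G] [AddCommGroup G] [IsOrderedAddMonoid G]

lemma abs_two_nsmul (y : G) : |2 • y| = 2 • |y| := by
  symm
  calc 2 • |y| = (y + y) ⊔ (y - y) ⊔ ((y - y) ⊔ -(y + y)) := by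
        simp only [two_nsmul, abs, sup_add, add_sup, neg_add, sub_eq_add_neg]
        abel_nf
    _ = |2 • y| ⊔ 0 := by
        rw [sub_self, two_nsmul, abs, sup_comm _ (-(y + y)), sup_sup_sup_comm, sup_idem]
    _ = |2 • y| := sup_eq_left.2 (abs_nonneg _)

lemma abs_le_abs_two_pow_nsmul (y : G) (j : ℕ) : |y| ≤ |2 ^ j • y| := by
  induction j with
  | zero => simp
  | succ j ih =>
    rw [pow_succ, mul_nsmul, abs_two_nsmul, two_nsmul]
    exact le_add_of_le_of_nonneg ih (abs_nonneg _)

end LatticeOrderedGroup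

section NormedLattice

variable {G : Type*} [NormedAddCommGroup G] [Lattice G] [HasSolidNorm G] [IsOrderedAddMonoid G]

lemma UnNullSeq.of_abs_le {x y : ℕ → G} (hx : UnNullSeq x) (h : ∀ n, |y n| ≤ |x n|) :
    UnNullSeq y := by
  intro u hu
  refine squeeze_zero (fun _ => norm_nonneg _) (fun n => norm_le_norm_of_abs_le_abs ?_) (hx u hu)
  rw [abs_of_nonneg (le_inf (abs_nonneg _) hu), abs_of_nonneg (le_inf (abs_nonneg _) hu)]
  exact inf_le_inf_right u (h n)

lemma UnNullSeq.inv_two_pow_smul [NormedSpace ℝ G] {x : ℕ → G} (hx : UnNullSeq x) (j : ℕ) :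
    UnNullSeq fun n => ((2 : ℝ) ^ j)⁻¹ • x n := by
  refine hx.of_abs_le fun n => ?_
  convert abs_le_abs_two_pow_nsmul (((2 : ℝ) ^ j)⁻¹ • x n) j using 2
  rw [← Nat.cast_smul_eq_nsmul ℝ, smul_smul]
  push_cast
  rw [mul_inv_cancel₀ (by positivity), one_smul]

lemma WeakMWeaklyCompact.tendsto_of_normBddSeq [NormedSpace ℝ G] {X : Type*}
    [NormedAddCommGroup X] [NormedSpace ℝ X] {T : G →L[ℝ] X} (hT : WeakMWeaklyCompact T)
    {x : ℕ → G} (hbdd : NormBddSeq x) (hx : UnNullSeq x) :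
    Tendsto (fun n => ‖T (x n)‖) atTop (𝓝 0) := by
  obtain ⟨C, hC⟩ := hbdd
  obtain ⟨j, hj⟩ := pow_unbounded_of_one_lt C (one_lt_two : (1 : ℝ) < 2)
  have hpos : (0 : ℝ) < 2 ^ j := by positivity
  have hball : ∀ n, ‖((2 : ℝ) ^ j)⁻¹ • x n‖ ≤ 1 := fun n => by
    rw [norm_smul, norm_inv, Real.norm_of_nonneg hpos.le, inv_mul_le_iff₀ hpos, mul_one]
    exact (hC n).trans hj.le
  have := (hT _ hball (hx.inv_two_pow_smul j)).const_mul (2 ^ j)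
  rw [mul_zero] at this
  refine this.congr fun n => ?_
  rw [map_smul, norm_smul, norm_inv, Real.norm_of_nonneg hpos.le, mul_inv_cancel_left₀ hpos.ne']

end NormedLattice

lemma ContinuousLinearMap.biSup_closedBall_abs_eq_norm {E : Type*} [NormedAddCommGroup E]
    [NormedSpace ℝ E] (φ : StrongDual ℝ E) :
    ⨆ x ∈ Metric.closedBall (0 : E) 1, |φ x| = ‖φ‖ := by
  have hbdd : BddAbove (Set.range fun x : Metric.closedBall (0 : E) 1 => |φ x|) :=
    ⟨‖φ‖, Set.forall_mem_range.2 fun x => by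
      simpa using φ.unit_le_opNorm x (mem_closedBall_zero_iff.1 x.2)⟩
  rw [cbiSup_eq_ciSup_subtype hbdd (by simpa using Real.iSup_nonneg fun _ => abs_nonneg _),
    ← φ.sSup_unitClosedBall_eq_norm, sSup_image']
  simp only [Real.norm_eq_abs]

theorem stmt10_general {E : Type*} [NormedAddCommGroup E] [Lattice E] [HasSolidNorm E] [IsOrderedAddMonoid E] [NormedSpace ℝ E] {E' : Type*} [NormedAddCommGroup E'] [Lattice E'] [HasSolidNorm E'] [IsOrderedAddMonoid E'] [NormedSpace ℝ E'] {F : Type*} [NormedAddCommGroup F] [Lattice F] [HasSolidNorm F] [IsOrderedAddMonoid F] [NormedSpace ℝ F] {F' : Type*} [NormedAddCommGroup F'] [Lattice F'] [HasSolidNorm F'] [IsOrderedAddMonoid F'] [NormedSpace ℝ F']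
    (P : DualPairing E E') (Q : DualPairing F F')
    (T : E →L[ℝ] F) (T' : F' →L[ℝ] E')
    (hadj : ∀ (g : F') (x : E), P.toDual (T' g) x = Q.toDual g (T x)) :
    WeakLWCOperator Q T ↔ WeakMWeaklyCompact T' := by
  have hsup : ∀ g : F', ⨆ x ∈ Metric.closedBall (0 : E) 1, |Q.toDual g (T x)| = ‖T' g‖ := by
    intro g
    simp_rw [← hadj, ContinuousLinearMap.biSup_closedBall_abs_eq_norm, LinearIsometryEquiv.norm_map]
  simp only [WeakLWCOperator, hsup]
  exact ⟨fun hT g hball hun => hT g ⟨1, hball⟩ hun,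
    fun hT g hbdd hun => hT.tendsto_of_normBddSeq hbdd hun⟩

/-- `T : E → F` is weak L-weakly compact iff its adjoint `T' : F' → E'` is weak M-weakly
compact. -/
theorem stmt10 {E : Type*} [NormedAddCommGroup E] [Lattice E] [HasSolidNorm E] [IsOrderedAddMonoid E] [NormedSpace ℝ E] [CompleteSpace E] {E' : Type*} [NormedAddCommGroup E'] [Lattice E'] [HasSolidNorm E'] [IsOrderedAddMonoid E'] [NormedSpace ℝ E'] [CompleteSpace E'] {F : Type*} [NormedAddCommGroup F] [Lattice F] [HasSolidNorm F] [IsOrderedAddMonoid F] [NormedSpace ℝ F] [CompleteSpace F] {F' : Type*} [NormedAddCommGroup F'] [Lattice F'] [HasSolidNorm F'] [IsOrderedAddMonoid F'] [NormedSpace ℝ F'] [CompleteSpace F']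
    (P : DualPairing E E') (Q : DualPairing F F')
    (T : E →L[ℝ] F) (T' : F' →L[ℝ] E')
    (hadj : ∀ (g : F') (x : E), P.toDual (T' g) x = Q.toDual g (T x)) :
    WeakLWCOperator Q T ↔ WeakMWeaklyCompact T' :=
  stmt10_general P Q T T' hadj
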